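/- arXiv:1206.2536 — 4 statements merged into one kernel-verified Lean document; each statement's English description precedes it below -/
import Mathlib

section
/- For any nonzero matrix X with singular values x_1 ≥ x_2 ≥ ... and trace norm Λ_x = Σ_i x_i, and any q with 1 < q < ∞, the Rényi entropy of the normalized singular values satisfies ln(Λ_x / x_1) ≤ S_q(X) ≤ (q/(q-1)) ln(Λ_x / x_1), where S_q(X) = (1/(1-q)) ln Σ_i (x_i/Λ_x)^q. -/
open Matrix
open scoped BigOperators Kronecker ComplexOrder

noncomputable section

/-- Singular values of a square complex matrix: square roots of eigenvalues of `X * Xᴴ`. -/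
def singularValues {n : Type*} [Fintype n] [DecidableEq n] (X : Matrix n n ℂ) : n → ℝ :=
  fun i => Real.sqrt ((Matrix.posSemidef_self_mul_conjTranspose X).1.eigenvalues i)

/-- Shannon entropy of the normalization of a nonnegative vector. -/
def shannonH {ι : Type*} [Fintype ι] (v : ι → ℝ) : ℝ :=
  -∑ i, (v i / ∑ j, v j) * Real.log (v i / ∑ j, v j)

/-- Rényi entropy of order `q` of the normalization of a nonnegative vector. -/
def renyiH {ι : Type*} [Fintype ι] (q : ℝ) (v : ι → ℝ) : ℝ :=
  (1 / (1 - q)) * Real.log (∑ i, (v i / ∑ j, v j) ^ q)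

/-- Unnormalized (von Neumann–type) entropy of the singular value vector. -/
def vnEntropy {n : Type*} [Fintype n] [DecidableEq n] (M : Matrix n n ℂ) : ℝ :=
  -∑ i, singularValues M i * Real.log (singularValues M i)

/-- A quantum channel: completely positive (Kraus form) and trace preserving. -/
def IsCPTP {N : ℕ} (Φ : Matrix (Fin N) (Fin N) ℂ →ₗ[ℂ] Matrix (Fin N) (Fin N) ℂ) : Prop :=
  ∃ (k : ℕ) (A : Fin k → Matrix (Fin N) (Fin N) ℂ),
    (∀ ρ, Φ ρ = ∑ i, A i * ρ * (A i)ᴴ) ∧ (∑ i, (A i)ᴴ * A i = 1)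

/-- Density matrix predicate. -/
def IsDensityMatrix {n : Type*} [Fintype n] [DecidableEq n] (ρ : Matrix n n ℂ) : Prop :=
  ρ.PosSemidef ∧ ρ.trace = 1

/-- The Choi (dynamical) matrix of a linear map on matrices. -/
def choiMatrix {N : ℕ} (Φ : Matrix (Fin N) (Fin N) ℂ →ₗ[ℂ] Matrix (Fin N) (Fin N) ℂ) :
    Matrix (Fin N × Fin N) (Fin N × Fin N) ℂ :=
  fun p q => Φ (Matrix.single p.2 q.2 1) p.1 q.1

/-- The superoperator matrix of a linear map on matrices. -/
def superMatrix {N : ℕ} (Φ : Matrix (Fin N) (Fin N) ℂ →ₗ[ℂ] Matrix (Fin N) (Fin N) ℂ) :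
    Matrix (Fin N × Fin N) (Fin N × Fin N) ℂ :=
  fun p q => Φ (Matrix.single q.1 q.2 1) p.1 p.2

/-- Hilbert–Schmidt norm of a matrix. -/
def hsNorm {n : Type*} [Fintype n] [DecidableEq n] (M : Matrix n n ℂ) : ℝ :=
  Real.sqrt ((M * Mᴴ).trace.re)

/-- Largest singular value of the superoperator of `Φ`, as the operator norm w.r.t. HS norm. -/
def sigma1 {N : ℕ} (Φ : Matrix (Fin N) (Fin N) ℂ →ₗ[ℂ] Matrix (Fin N) (Fin N) ℂ) : ℝ :=
  sSup {r : ℝ | ∃ M : Matrix (Fin N) (Fin N) ℂ, hsNorm M = 1 ∧ r = hsNorm (Φ M)}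

/-- Sum of the (at most) `m` largest entries of a nonnegative vector. -/
def partialMax {ι : Type*} [Fintype ι] (v : ι → ℝ) (m : ℕ) : ℝ :=
  sSup {t : ℝ | ∃ s : Finset ι, s.card ≤ m ∧ t = ∑ i ∈ s, v i}

/-- `Majorizes w v` means `v ≺ w` (for nonnegative vectors, possibly of different lengths). -/
def Majorizes {ι κ : Type*} [Fintype ι] [Fintype κ] (w : ι → ℝ) (v : κ → ℝ) : Prop :=
  (∑ i, v i = ∑ i, w i) ∧ ∀ m : ℕ, partialMax v m ≤ partialMax w m

/-!
If `r` is the largest of the weights `pᵢ = xᵢ / Λ`, then `r ^ q ≤ ∑ pᵢ ^ q ≤ r ^ (q - 1) ∑ pᵢ = r ^ (q - 1)`: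
the first sum keeps only the largest term, the second bounds `pᵢ ^ (q - 1)` by `r ^ (q - 1)`.
Taking logarithms and dividing by `1 - q < 0` gives the two bounds, as `ln (Λ / x₁) = -ln r`.
-/

lemma rpow_le_sum_rpow {ι : Type*} [Fintype ι] {p : ι → ℝ} (hp : ∀ i, 0 ≤ p i) (i : ι)
    (q : ℝ) : p i ^ q ≤ ∑ j, p j ^ q :=
  Finset.single_le_sum (fun j _ => Real.rpow_nonneg (hp j) q) (Finset.mem_univ i)

lemma sum_rpow_le_rpow_sub_one {ι : Type*} [Fintype ι] {p : ι → ℝ} (hp : ∀ i, 0 ≤ p i)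
    (hsum : ∑ i, p i = 1) {a : ℝ} (hle : ∀ i, p i ≤ a) {q : ℝ} (hq : 1 ≤ q) :
    ∑ i, p i ^ q ≤ a ^ (q - 1) :=
  calc ∑ i, p i ^ q = ∑ i, p i ^ (q - 1) * p i := by
        refine Finset.sum_congr rfl fun i _ => ?_
        rw [← Real.rpow_add_one' (hp i) (by linarith), sub_add_cancel]
    _ ≤ ∑ i, a ^ (q - 1) * p i := Finset.sum_le_sum fun i _ =>
        mul_le_mul_of_nonneg_right (Real.rpow_le_rpow (hp i) (hle i) (by linarith)) (hp i)
    _ = a ^ (q - 1) := by rw [← Finset.mul_sum, hsum, mul_one]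

lemma log_bounds_of_rpow_le_of_le_rpow {r S q : ℝ} (hr : 0 < r) (hq : 1 < q)
    (hlow : r ^ q ≤ S) (hup : S ≤ r ^ (q - 1)) :
    -Real.log r ≤ 1 / (1 - q) * Real.log S ∧
      1 / (1 - q) * Real.log S ≤ q / (q - 1) * -Real.log r := by
  have hS : 0 < S := (Real.rpow_pos_of_pos hr q).trans_le hlow
  have hlog_up : Real.log S ≤ (q - 1) * Real.log r := by
    simpa only [Real.log_rpow hr] using Real.log_le_log hS hup
  have hlog_low : q * Real.log r ≤ Real.log S := by
    simpa only [Real.log_rpow hr] using Real.log_le_log (Real.rpow_pos_of_pos hr q) hlow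
  have hq' : 0 < q - 1 := sub_pos.mpr hq
  have hdiv : 1 / (1 - q) * Real.log S = -(Real.log S / (q - 1)) := by
    rw [← neg_sub q 1, one_div, inv_neg]
    ring
  rw [hdiv, neg_le_neg_iff, div_le_iff₀ hq']
  refine ⟨by linarith, ?_⟩
  rw [mul_neg, ← mul_div_right_comm, neg_le_neg_iff, div_le_div_iff_of_pos_right hq']
  exact hlog_low

theorem log_sum_div_iSup_le_renyiH_and_renyiH_le {ι : Type*} [Fintype ι]
    {x : ι → ℝ} (hx : ∀ i, 0 ≤ x i) (hpos : 0 < ∑ i, x i) {q : ℝ} (hq : 1 < q) :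
    Real.log ((∑ i, x i) / (⨆ i, x i)) ≤ renyiH q x ∧
      renyiH q x ≤ (q / (q - 1)) * Real.log ((∑ i, x i) / (⨆ i, x i)) := by
  have : Nonempty ι := Finset.univ_nonempty_iff.mp (Finset.nonempty_of_sum_ne_zero hpos.ne')
  obtain ⟨i₀, hi₀⟩ := exists_eq_ciSup_of_finite (f := x)
  have hmax : ∀ i, x i ≤ x i₀ := fun i => hi₀ ▸ le_ciSup (Set.finite_range x).bddAbove i
  set Λ := ∑ i, x i
  have hx₀ : 0 < x i₀ := by
    by_contra! h
    exact hpos.not_ge (Finset.sum_nonpos fun i _ => (hmax i).trans h)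
  have hp : ∀ i, 0 ≤ x i / Λ := fun i => div_nonneg (hx i) hpos.le
  have hpsum : ∑ i, x i / Λ = 1 := by rw [← Finset.sum_div, div_self hpos.ne']
  have hlog : Real.log (Λ / x i₀) = -Real.log (x i₀ / Λ) := by rw [← Real.log_inv, inv_div]
  rw [← hi₀, hlog]
  exact log_bounds_of_rpow_le_of_le_rpow (div_pos hx₀ hpos) hq (rpow_le_sum_rpow hp i₀ q)
    (sum_rpow_le_rpow_sub_one hp hpsum (fun i => div_le_div_of_nonneg_right (hmax i) hpos.le)
      hq.le)

lemma singularValues_nonneg {n : Type*} [Fintype n] [DecidableEq n] (X : Matrix n n ℂ) (i : n) :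
    0 ≤ singularValues X i :=
  Real.sqrt_nonneg _

lemma sum_singularValues_pos {n : Type*} [Fintype n] [DecidableEq n] {X : Matrix n n ℂ}
    (hX : X ≠ 0) : 0 < ∑ i, singularValues X i := by
  have hXX := posSemidef_self_mul_conjTranspose X
  obtain ⟨i, hi⟩ : ∃ i, hXX.1.eigenvalues i ≠ 0 := by
    by_contra! h
    exact hX (self_mul_conjTranspose_eq_zero.mp (hXX.1.eigenvalues_eq_zero_iff.mp (funext h)))
  refine Finset.sum_pos' (fun j _ => singularValues_nonneg X j) ⟨i, Finset.mem_univ i, ?_⟩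
  exact Real.sqrt_pos.mpr ((hXX.eigenvalues_nonneg i).lt_of_ne' hi)

theorem renyi_entropy_singular_bounds_general {n : Type*} [Fintype n] [DecidableEq n]
    (X : Matrix n n ℂ) (hX : X ≠ 0) (q : ℝ) (hq : 1 < q) :
    Real.log ((∑ i, singularValues X i) / (⨆ i, singularValues X i))
        ≤ renyiH q (singularValues X) ∧
    renyiH q (singularValues X)
        ≤ (q / (q - 1)) *
          Real.log ((∑ i, singularValues X i) / (⨆ i, singularValues X i)) :=
  log_sum_div_iSup_le_renyiH_and_renyiH_le (singularValues_nonneg X) (sum_singularValues_pos hX) hq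

theorem renyi_entropy_singular_bounds {n : Type*} [Fintype n] [DecidableEq n] [Nonempty n]
    (X : Matrix n n ℂ) (hX : X ≠ 0) (q : ℝ) (hq : 1 < q) :
    Real.log ((∑ i, singularValues X i) / (⨆ i, singularValues X i))
        ≤ renyiH q (singularValues X) ∧
    renyiH q (singularValues X)
        ≤ (q / (q - 1)) *
          Real.log ((∑ i, singularValues X i) / (⨆ i, singularValues X i)) :=
  renyi_entropy_singular_bounds_general X hX q hq

end
end

section
/- For any CPTP map Φ acting on N×N density matrices, the largest singular value of its superoperator matrix satisfies σ_1(Φ) = max over density matrices ρ of √(Tr Φ(ρ)² / Tr ρ²). -/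
open Matrix
open scoped BigOperators Kronecker ComplexOrder

noncomputable section

/-! Normalised density matrices are unit vectors, so only `‖Φ M‖ ≤ s ‖M‖` needs proof, where `s` is
the supremum over density matrices, and by scaling it holds for every positive semidefinite `M`.
A Hermitian `H` splits as `H⁺ - H⁻` with `H⁺ H⁻ = 0`, so `‖H‖ = ‖H⁺ + H⁻‖` in Hilbert–Schmidt
norm; positivity of `Φ` gives `Re ⟪Φ H⁺, Φ H⁻⟫ ≥ 0`, whence `‖Φ H‖ ≤ ‖Φ (H⁺ + H⁻)‖ ≤ s ‖H‖`.
A general `M = H + i K` with `H, K` Hermitian follows by Pythagoras, since `Φ H, Φ K` are again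
Hermitian and `‖H + i K‖² = ‖H‖² + ‖K‖²` for Hermitian `H, K`. -/

open scoped InnerProductSpace MatrixOrder

lemma LinearMap.bddAbove_norm_apply_of_norm_eq_one {𝕜 E F : Type*} [RCLike 𝕜]
    [NormedAddCommGroup E] [NormedSpace 𝕜 E] [FiniteDimensional 𝕜 E]
    [NormedAddCommGroup F] [NormedSpace 𝕜 F] (f : E →ₗ[𝕜] F) :
    BddAbove {r : ℝ | ∃ x : E, ‖x‖ = 1 ∧ r = ‖f x‖} := by
  refine ⟨‖LinearMap.toContinuousLinearMap f‖, ?_⟩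
  rintro _ ⟨x, hx, rfl⟩
  simpa [hx] using (LinearMap.toContinuousLinearMap f).le_opNorm x

namespace Matrix

variable {n : Type*} [Fintype n]

lemma PosSemidef.re_trace_pos {ρ : Matrix n n ℂ} (hρ : ρ.PosSemidef) (hne : ρ ≠ 0) :
    0 < ρ.trace.re :=
  (Complex.pos_iff.mp (lt_of_le_of_ne hρ.trace_nonneg
    fun h => hne (hρ.trace_eq_zero_iff.mp h.symm))).1

variable [DecidableEq n]

/-- `toMatrixNormedAddCommGroup 1` is the Hilbert–Schmidt norm `‖M‖ = √(Re tr (M Mᴴ))`, coming from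
the inner product `⟪X, Y⟫ = tr (Y Xᴴ)`. -/
abbrev hsNormedAddCommGroup : NormedAddCommGroup (Matrix n n ℂ) :=
  toMatrixNormedAddCommGroup 1 PosDef.one

attribute [local instance] hsNormedAddCommGroup

abbrev hsInnerProductSpace : InnerProductSpace ℂ (Matrix n n ℂ) :=
  toMatrixInnerProductSpace 1 PosDef.one.posSemidef

attribute [local instance] hsInnerProductSpace

lemma inner_eq_trace (X Y : Matrix n n ℂ) : ⟪X, Y⟫_ℂ = (Y * Xᴴ).trace := by
  show (Y * 1 * Xᴴ).trace = _
  rw [Matrix.mul_one]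

lemma hsNorm_eq_norm (M : Matrix n n ℂ) : hsNorm M = ‖M‖ := by
  rw [@norm_eq_sqrt_re_inner ℂ, inner_eq_trace]
  rfl

lemma IsHermitian.re_trace_mul_self {X : Matrix n n ℂ} (hX : X.IsHermitian) :
    (X * X).trace.re = ‖X‖ ^ 2 := by
  rw [← inner_self_eq_norm_sq (𝕜 := ℂ), inner_eq_trace, hX.eq]
  rfl

lemma IsHermitian.sqrt_re_trace_mul_self_div {X Y : Matrix n n ℂ} (hX : X.IsHermitian)
    (hY : Y.IsHermitian) : √((Y * Y).trace.re / (X * X).trace.re) = ‖Y‖ / ‖X‖ := by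
  rw [hX.re_trace_mul_self, hY.re_trace_mul_self, ← div_pow, Real.sqrt_sq (by positivity)]

lemma PosSemidef.trace_mul_nonneg {P Q : Matrix n n ℂ} (hP : P.PosSemidef) (hQ : Q.PosSemidef) :
    0 ≤ (P * Q).trace := by
  obtain ⟨B, rfl⟩ := CStarAlgebra.nonneg_iff_eq_star_mul_self.mp hQ.nonneg
  rw [← Matrix.mul_assoc, trace_mul_cycle, star_eq_conjTranspose]
  exact (hP.mul_mul_conjTranspose_same B).trace_nonneg

lemma PosSemidef.norm_sub_le_norm_add {P Q : Matrix n n ℂ} (hP : P.PosSemidef)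
    (hQ : Q.PosSemidef) : ‖P - Q‖ ≤ ‖P + Q‖ := by
  have hPQ : 0 ≤ RCLike.re ⟪P, Q⟫_ℂ := by
    rw [inner_eq_trace, hP.isHermitian.eq]
    exact (RCLike.nonneg_iff.mp (hQ.trace_mul_nonneg hP)).1
  rw [← pow_le_pow_iff_left₀ (norm_nonneg _) (norm_nonneg _) two_ne_zero,
    norm_sub_sq (𝕜 := ℂ), norm_add_sq (𝕜 := ℂ)]
  linarith

lemma posSemidef_posPart (H : Matrix n n ℂ) : (H⁺).PosSemidef :=
  nonneg_iff_posSemidef.mp (CFC.posPart_nonneg H)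

lemma posSemidef_negPart (H : Matrix n n ℂ) : (H⁻).PosSemidef :=
  nonneg_iff_posSemidef.mp (CFC.negPart_nonneg H)

lemma IsHermitian.posPart_sub_negPart {H : Matrix n n ℂ} (hH : H.IsHermitian) : H⁺ - H⁻ = H :=
  CFC.posPart_sub_negPart H (isHermitian_iff_isSelfAdjoint.mp hH)

lemma IsHermitian.norm_posPart_add_negPart {H : Matrix n n ℂ} (hH : H.IsHermitian) :
    ‖H⁺ + H⁻‖ = ‖H‖ := by
  have h : ⟪H⁻, H⁺⟫_ℂ = 0 := by
    rw [inner_eq_trace, (posSemidef_negPart H).isHermitian.eq, CFC.posPart_mul_negPart,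
      trace_zero]
  rw [← norm_sub_eq_norm_add h, hH.posPart_sub_negPart]

lemma IsHermitian.norm_add_I_smul_sq {H K : Matrix n n ℂ} (hH : H.IsHermitian)
    (hK : K.IsHermitian) : ‖H + Complex.I • K‖ ^ 2 = ‖H‖ ^ 2 + ‖K‖ ^ 2 := by
  have h_real : (⟪H, K⟫_ℂ).im = 0 := by
    rw [inner_eq_trace, hH.eq, ← Complex.conj_eq_iff_im, ← Complex.star_def,
      ← trace_conjTranspose, conjTranspose_mul, hH.eq, hK.eq, trace_mul_comm]
  rw [norm_add_sq (𝕜 := ℂ), inner_smul_right, norm_smul, Complex.norm_I, one_mul]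
  simp [h_real]

lemma PosSemidef.isDensityMatrix_inv_trace_smul {ρ : Matrix n n ℂ} (hρ : ρ.PosSemidef)
    (hne : ρ ≠ 0) : IsDensityMatrix ((ρ.trace.re)⁻¹ • ρ) := by
  have hc := hρ.re_trace_pos hne
  refine ⟨hρ.smul (inv_nonneg.mpr hc.le), ?_⟩
  rw [trace_smul]
  apply Complex.ext
  · simp [inv_mul_cancel₀ hc.ne']
  · simp [(Complex.nonneg_iff.mp hρ.trace_nonneg).2.symm]

lemma IsDensityMatrix.ne_zero {ρ : Matrix n n ℂ} (hρ : IsDensityMatrix ρ) : ρ ≠ 0 := by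
  rintro rfl
  simpa using hρ.2

lemma PosSemidef.norm_apply_le_of_isDensityMatrix {Φ : Matrix n n ℂ →ₗ[ℂ] Matrix n n ℂ} {s : ℝ}
    (h : ∀ ρ, IsDensityMatrix ρ → ‖Φ ρ‖ ≤ s * ‖ρ‖) {ρ : Matrix n n ℂ} (hρ : ρ.PosSemidef) :
    ‖Φ ρ‖ ≤ s * ‖ρ‖ := by
  rcases eq_or_ne ρ 0 with rfl | hne
  · simp
  have hc := inv_pos.mpr (hρ.re_trace_pos hne)
  have := h _ (hρ.isDensityMatrix_inv_trace_smul hne)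
  rw [LinearMap.map_smul_of_tower, norm_smul, norm_smul, Real.norm_of_nonneg hc.le,
    mul_left_comm] at this
  exact le_of_mul_le_mul_left this hc

end Matrix

def IsPositiveMap {n : Type*} [Fintype n] (Φ : Matrix n n ℂ →ₗ[ℂ] Matrix n n ℂ) : Prop :=
  ∀ ρ : Matrix n n ℂ, ρ.PosSemidef → (Φ ρ).PosSemidef

lemma IsCPTP.isPositiveMap {N : ℕ} {Φ : Matrix (Fin N) (Fin N) ℂ →ₗ[ℂ] Matrix (Fin N) (Fin N) ℂ}
    (hΦ : IsCPTP Φ) : IsPositiveMap Φ := by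
  obtain ⟨k, A, hKraus, -⟩ := hΦ
  intro ρ hρ
  rw [hKraus]
  exact posSemidef_sum _ fun i _ => hρ.mul_mul_conjTranspose_same (A i)

attribute [local instance] hsNormedAddCommGroup hsInnerProductSpace

namespace IsPositiveMap

variable {n : Type*} [Fintype n] [DecidableEq n] {Φ : Matrix n n ℂ →ₗ[ℂ] Matrix n n ℂ}

lemma isHermitian_apply (hΦ : IsPositiveMap Φ) {H : Matrix n n ℂ} (hH : H.IsHermitian) :
    (Φ H).IsHermitian := by
  rw [← hH.posPart_sub_negPart, map_sub]
  exact (hΦ _ (posSemidef_posPart H)).isHermitian.sub (hΦ _ (posSemidef_negPart H)).isHermitian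

lemma norm_apply_le_of_isHermitian (hΦ : IsPositiveMap Φ) {s : ℝ}
    (h : ∀ ρ, ρ.PosSemidef → ‖Φ ρ‖ ≤ s * ‖ρ‖) {H : Matrix n n ℂ} (hH : H.IsHermitian) :
    ‖Φ H‖ ≤ s * ‖H‖ :=
  calc ‖Φ H‖ = ‖Φ H⁺ - Φ H⁻‖ := by rw [← map_sub, hH.posPart_sub_negPart]
    _ ≤ ‖Φ H⁺ + Φ H⁻‖ :=
      (hΦ _ (posSemidef_posPart H)).norm_sub_le_norm_add (hΦ _ (posSemidef_negPart H))
    _ = ‖Φ (H⁺ + H⁻)‖ := by rw [map_add]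
    _ ≤ s * ‖H⁺ + H⁻‖ := h _ ((posSemidef_posPart H).add (posSemidef_negPart H))
    _ = s * ‖H‖ := by rw [hH.norm_posPart_add_negPart]

lemma norm_apply_le (hΦ : IsPositiveMap Φ) {s : ℝ} (hs : 0 ≤ s)
    (h : ∀ ρ, IsDensityMatrix ρ → ‖Φ ρ‖ ≤ s * ‖ρ‖) (M : Matrix n n ℂ) : ‖Φ M‖ ≤ s * ‖M‖ := by
  have hherm {H : Matrix n n ℂ} (hH : H.IsHermitian) : ‖Φ H‖ ^ 2 ≤ s ^ 2 * ‖H‖ ^ 2 := by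
    rw [← mul_pow]
    exact pow_le_pow_left₀ (norm_nonneg _)
      (hΦ.norm_apply_le_of_isHermitian (fun _ hρ => hρ.norm_apply_le_of_isDensityMatrix h) hH) 2
  obtain ⟨H, K, hH, hK, rfl⟩ : ∃ H K : Matrix n n ℂ, H.IsHermitian ∧ K.IsHermitian ∧
      M = H + Complex.I • K :=
    ⟨_, _, (realPart M).2, (imaginaryPart M).2, (realPart_add_I_smul_imaginaryPart M).symm⟩
  rw [← pow_le_pow_iff_left₀ (norm_nonneg _) (by positivity) two_ne_zero, mul_pow, map_add,
    map_smul, (hΦ.isHermitian_apply hH).norm_add_I_smul_sq (hΦ.isHermitian_apply hK),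
    hH.norm_add_I_smul_sq hK]
  linarith [hherm hH, hherm hK]

theorem sSup_norm_apply_eq_sSup_isDensityMatrix (hΦ : IsPositiveMap Φ) :
    sSup {r : ℝ | ∃ M, ‖M‖ = 1 ∧ r = ‖Φ M‖} =
      sSup {r : ℝ | ∃ ρ, IsDensityMatrix ρ ∧ r = ‖Φ ρ‖ / ‖ρ‖} := by
  set S := {r : ℝ | ∃ ρ, IsDensityMatrix ρ ∧ r = ‖Φ ρ‖ / ‖ρ‖}
  have hbdd := Φ.bddAbove_norm_apply_of_norm_eq_one
  have hunit : S ⊆ {r : ℝ | ∃ M, ‖M‖ = 1 ∧ r = ‖Φ M‖} := by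
    rintro _ ⟨ρ, hρ, rfl⟩
    refine ⟨(‖ρ‖⁻¹ : ℂ) • ρ, norm_smul_inv_norm hρ.ne_zero, ?_⟩
    rw [map_smul, norm_smul, norm_inv, Complex.norm_real, norm_norm, inv_mul_eq_div]
  have hs : 0 ≤ sSup S := Real.sSup_nonneg (by rintro _ ⟨ρ, -, rfl⟩; positivity)
  have hbound (ρ) (hρ : IsDensityMatrix ρ) : ‖Φ ρ‖ ≤ sSup S * ‖ρ‖ := by
    rw [← div_le_iff₀ (norm_pos_iff.mpr hρ.ne_zero)]
    exact le_csSup (hbdd.mono hunit) ⟨ρ, hρ, rfl⟩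
  refine le_antisymm (Real.sSup_le ?_ hs) (Real.sSup_le (fun r hr => le_csSup hbdd (hunit hr)) ?_)
  · rintro _ ⟨M, hM, rfl⟩
    simpa [hM] using hΦ.norm_apply_le hs hbound M
  · exact Real.sSup_nonneg (by rintro _ ⟨M, -, rfl⟩; positivity)

end IsPositiveMap

theorem sigma1_eq_sup_over_density_matrices_general {N : ℕ}
    (Φ : Matrix (Fin N) (Fin N) ℂ →ₗ[ℂ] Matrix (Fin N) (Fin N) ℂ) (hΦ : IsCPTP Φ) :
    sigma1 Φ = sSup {r : ℝ | ∃ ρ : Matrix (Fin N) (Fin N) ℂ, IsDensityMatrix ρ ∧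
      r = Real.sqrt ((Φ ρ * Φ ρ).trace.re / (ρ * ρ).trace.re)} := by
  have hpos := hΦ.isPositiveMap
  simp only [sigma1, hsNorm_eq_norm, hpos.sSup_norm_apply_eq_sSup_isDensityMatrix]
  congr 1
  ext r
  refine exists_congr fun ρ => and_congr_right fun hρ => ?_
  rw [hρ.1.isHermitian.sqrt_re_trace_mul_self_div (hpos ρ hρ.1).isHermitian]

theorem sigma1_eq_sup_over_density_matrices {N : ℕ} (hN : 0 < N)
    (Φ : Matrix (Fin N) (Fin N) ℂ →ₗ[ℂ] Matrix (Fin N) (Fin N) ℂ) (hΦ : IsCPTP Φ) :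
    sigma1 Φ = sSup {r : ℝ | ∃ ρ : Matrix (Fin N) (Fin N) ℂ, IsDensityMatrix ρ ∧
      r = Real.sqrt ((Φ ρ * Φ ρ).trace.re / (ρ * ρ).trace.re)} :=
  sigma1_eq_sup_over_density_matrices_general Φ hΦ
end
end

section
/- For any CPTP map Φ on N×N density matrices, the largest singular value of its superoperator satisfies σ_1(Φ) ≤ √(N τ_1) ≤ √N, where τ_1 is the largest eigenvalue of the density matrix Φ(𝟙/N). -/
open Matrix
open scoped BigOperators Kronecker ComplexOrder

noncomputable section

/-!
Write `Φ M = ∑ᵢ Aᵢ (M Aᵢᴴ)`. By trace preservation `∑ᵢ ‖M Aᵢᴴ‖₂² = ‖M‖₂²`, so it suffices that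
`‖∑ᵢ Aᵢ Zᵢ‖₂² ≤ c ∑ᵢ ‖Zᵢ‖₂²` whenever `∑ᵢ Aᵢ Aᵢᴴ ≤ c`. For `c` take `N τ₁`: indeed
`∑ᵢ Aᵢ Aᵢᴴ = N Φ(𝟙/N)`, and the largest singular value `τ₁` of `Φ(𝟙/N)` is its C⋆-norm, so
`Φ(𝟙/N) ≤ τ₁`. Finally `τ₁ ≤ 1` since `Φ(𝟙/N)` is a density matrix.
-/

open scoped MatrixOrder

section HilbertSchmidt

variable {n : Type*} [Fintype n] [DecidableEq n]

lemma hsNorm_nonneg (M : Matrix n n ℂ) : 0 ≤ hsNorm M :=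
  Real.sqrt_nonneg _

lemma hsNorm_sq (M : Matrix n n ℂ) : hsNorm M ^ 2 = (M * Mᴴ).trace.re :=
  Real.sq_sqrt (Complex.nonneg_iff.mp (posSemidef_self_mul_conjTranspose M).trace_nonneg).1

lemma re_trace_mul_conjTranspose_le (X Y : Matrix n n ℂ) :
    (X * Yᴴ).trace.re ≤ hsNorm X * hsNorm Y := by
  let _ := (1 : Matrix n n ℂ).toMatrixSeminormedAddCommGroup PosSemidef.one
  let _ := (1 : Matrix n n ℂ).toMatrixInnerProductSpace PosSemidef.one
  have hinner : ∀ Z W : Matrix n n ℂ, inner ℂ W Z = (Z * Wᴴ).trace := fun Z W => by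
    change (Z * 1 * Wᴴ).trace = _
    rw [Matrix.mul_one]
  have hnorm : ∀ Z : Matrix n n ℂ, ‖Z‖ = hsNorm Z := fun Z => by
    rw [norm_eq_sqrt_re_inner (𝕜 := ℂ), hinner, hsNorm, RCLike.re_to_complex]
  rw [mul_comm, ← hnorm, ← hnorm, ← hinner]
  exact re_inner_le_norm (𝕜 := ℂ) Y X

lemma re_trace_conjTranspose_mul_mul_le {A : Matrix n n ℂ} {c : ℝ}
    (hA : A ≤ algebraMap ℝ _ c) (W : Matrix n n ℂ) :
    (Wᴴ * A * W).trace.re ≤ c * (W * Wᴴ).trace.re := by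
  have h := (Matrix.le_iff.mp (star_left_conjugate_le_conjugate hA W)).trace_nonneg
  rw [Algebra.algebraMap_eq_smul_one, star_eq_conjTranspose, Matrix.mul_smul, Matrix.smul_mul,
    Matrix.mul_one, trace_sub, trace_smul, trace_mul_comm Wᴴ] at h
  have h_re := (Complex.nonneg_iff.mp h).1
  simp only [Complex.sub_re, Complex.real_smul, Complex.re_ofReal_mul] at h_re
  linarith

lemma hsNorm_sum_mul_le {ι : Type*} [Fintype ι] (A Z : ι → Matrix n n ℂ) {c : ℝ}
    (hA : ∑ i, A i * (A i)ᴴ ≤ algebraMap ℝ _ c) :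
    hsNorm (∑ i, A i * Z i) ≤ √c * √(∑ i, hsNorm (Z i) ^ 2) := by
  set W := ∑ i, A i * Z i
  -- Pair `W` with itself: `‖W‖₂² = ∑ᵢ ⟪Zᵢ, Aᵢᴴ W⟫`, then Cauchy–Schwarz twice.
  have hW : hsNorm W ^ 2 = ∑ i, (Z i * ((A i)ᴴ * W)ᴴ).trace.re := by
    rw [hsNorm_sq]
    conv_lhs => rw [show W * Wᴴ = ∑ i, A i * (Z i * Wᴴ) by simp [W, Finset.sum_mul, mul_assoc]]
    rw [trace_sum, Complex.re_sum]
    refine Finset.sum_congr rfl fun i _ => ?_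
    rw [trace_mul_comm, conjTranspose_mul, conjTranspose_conjTranspose, mul_assoc]
  have hAW : ∑ i, hsNorm ((A i)ᴴ * W) ^ 2 ≤ c * hsNorm W ^ 2 := by
    have hterm : ∀ i, hsNorm ((A i)ᴴ * W) ^ 2 = (Wᴴ * (A i * (A i)ᴴ) * W).trace.re := by
      intro i
      rw [hsNorm_sq, conjTranspose_mul, conjTranspose_conjTranspose, trace_mul_comm]
      simp only [mul_assoc]
    simp only [hterm, ← Complex.re_sum, ← trace_sum, ← Finset.mul_sum, ← Finset.sum_mul]
    rw [hsNorm_sq]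
    exact re_trace_conjTranspose_mul_mul_le hA W
  have hW0 := hsNorm_nonneg W
  have hAW' : √(∑ i, hsNorm ((A i)ᴴ * W) ^ 2) ≤ √c * hsNorm W :=
    calc _ ≤ √(c * hsNorm W ^ 2) := Real.sqrt_le_sqrt hAW
      _ = √c * hsNorm W := by rw [Real.sqrt_mul' _ (sq_nonneg _), Real.sqrt_sq hW0]
  have key : hsNorm W ^ 2 ≤ √(∑ i, hsNorm (Z i) ^ 2) * (√c * hsNorm W) :=
    calc hsNorm W ^ 2 = ∑ i, (Z i * ((A i)ᴴ * W)ᴴ).trace.re := hW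
      _ ≤ ∑ i, hsNorm (Z i) * hsNorm ((A i)ᴴ * W) :=
        Finset.sum_le_sum fun i _ => re_trace_mul_conjTranspose_le _ _
      _ ≤ √(∑ i, hsNorm (Z i) ^ 2) * √(∑ i, hsNorm ((A i)ᴴ * W) ^ 2) :=
        Real.sum_mul_le_sqrt_mul_sqrt _ _ _
      _ ≤ √(∑ i, hsNorm (Z i) ^ 2) * (√c * hsNorm W) :=
        mul_le_mul_of_nonneg_left hAW' (Real.sqrt_nonneg _)
  rcases hW0.eq_or_lt with hzero | hpos
  · exact hzero ▸ mul_nonneg (Real.sqrt_nonneg _) (Real.sqrt_nonneg _)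
  · refine le_of_mul_le_mul_right ?_ hpos
    linarith [key]

lemma hsNorm_kraus_le {ι : Type*} [Fintype ι] (A : ι → Matrix n n ℂ)
    (hTP : ∑ i, (A i)ᴴ * A i = 1) {c : ℝ} (hA : ∑ i, A i * (A i)ᴴ ≤ algebraMap ℝ _ c)
    (M : Matrix n n ℂ) : hsNorm (∑ i, A i * M * (A i)ᴴ) ≤ √c * hsNorm M := by
  have hsum : ∑ i, hsNorm (M * (A i)ᴴ) ^ 2 = hsNorm M ^ 2 := by
    simp only [hsNorm_sq, conjTranspose_mul, conjTranspose_conjTranspose, mul_assoc,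
      ← Finset.mul_sum, ← Complex.re_sum, ← trace_sum]
    simp only [← mul_assoc, ← Finset.sum_mul, hTP, mul_one]
  simpa only [mul_assoc, hsum, Real.sqrt_sq (hsNorm_nonneg M)] using
    hsNorm_sum_mul_le A (fun i => M * (A i)ᴴ) hA

end HilbertSchmidt

section Spectral

open scoped Matrix.Norms.L2Operator

variable {n : Type*} [Fintype n] [DecidableEq n]

namespace Matrix

lemma IsHermitian.le_algebraMap_iff_eigenvalues_le {A : Matrix n n ℂ} (hA : A.IsHermitian)
    {r : ℝ} : A ≤ algebraMap ℝ _ r ↔ ∀ i, hA.eigenvalues i ≤ r := by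
  rw [le_algebraMap_iff_spectrum_le hA.isSelfAdjoint, hA.spectrum_real_eq_range_eigenvalues,
    Set.forall_mem_range]

lemma norm_le_iff_forall_singularValues_le (X : Matrix n n ℂ) {r : ℝ} (hr : 0 ≤ r) :
    ‖X‖ ≤ r ↔ ∀ i, singularValues X i ≤ r := by
  rw [← pow_le_pow_iff_left₀ (norm_nonneg X) hr two_ne_zero, sq, ← CStarRing.norm_self_mul_star,
    star_eq_conjTranspose, CStarAlgebra.norm_le_iff_le_algebraMap _ (sq_nonneg r)
      (posSemidef_self_mul_conjTranspose X).nonneg,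
    IsHermitian.le_algebraMap_iff_eigenvalues_le (posSemidef_self_mul_conjTranspose X).1]
  simp only [singularValues, Real.sqrt_le_left hr]

lemma iSup_singularValues_eq_norm (X : Matrix n n ℂ) : ⨆ i, singularValues X i = ‖X‖ :=
  le_antisymm
    (Real.iSup_le ((norm_le_iff_forall_singularValues_le X (norm_nonneg X)).mp le_rfl)
      (norm_nonneg X))
    ((norm_le_iff_forall_singularValues_le X (Real.iSup_nonneg fun _ => Real.sqrt_nonneg _)).mpr
      fun i => le_ciSup (Set.finite_range _).bddAbove i)

lemma PosSemidef.le_algebraMap_re_trace {ρ : Matrix n n ℂ} (hρ : ρ.PosSemidef) :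
    ρ ≤ algebraMap ℝ _ ρ.trace.re := by
  rw [hρ.isHermitian.le_algebraMap_iff_eigenvalues_le, hρ.isHermitian.trace_eq_sum_eigenvalues]
  intro i
  simpa using Finset.single_le_sum (fun j _ => hρ.eigenvalues_nonneg j) (Finset.mem_univ i)

lemma PosSemidef.le_algebraMap_iSup_singularValues {ρ : Matrix n n ℂ} (hρ : ρ.PosSemidef) :
    ρ ≤ algebraMap ℝ _ (⨆ i, singularValues ρ i) :=
  iSup_singularValues_eq_norm ρ ▸ IsSelfAdjoint.le_algebraMap_norm_self hρ.isHermitian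

end Matrix

lemma IsDensityMatrix.norm_le_one {ρ : Matrix n n ℂ} (hρ : IsDensityMatrix ρ) : ‖ρ‖ ≤ 1 :=
  (CStarAlgebra.norm_le_iff_le_algebraMap ρ zero_le_one hρ.1.nonneg).mpr
    (by simpa [hρ.2] using hρ.1.le_algebraMap_re_trace)

lemma IsDensityMatrix.iSup_singularValues_le_one {ρ : Matrix n n ℂ} (hρ : IsDensityMatrix ρ) :
    ⨆ i, singularValues ρ i ≤ 1 :=
  iSup_singularValues_eq_norm ρ ▸ hρ.norm_le_one

end Spectral

lemma isDensityMatrix_inv_card_smul_one (n : Type*) [Fintype n] [DecidableEq n] [Nonempty n] :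
    IsDensityMatrix ((Fintype.card n : ℂ)⁻¹ • (1 : Matrix n n ℂ)) := by
  refine ⟨PosSemidef.one.smul (by positivity), ?_⟩
  rw [trace_smul, trace_one, smul_eq_mul, inv_mul_cancel₀ (by simp)]

lemma IsCPTP.isDensityMatrix_apply {N : ℕ}
    {Φ : Matrix (Fin N) (Fin N) ℂ →ₗ[ℂ] Matrix (Fin N) (Fin N) ℂ} (hΦ : IsCPTP Φ)
    {ρ : Matrix (Fin N) (Fin N) ℂ} (hρ : IsDensityMatrix ρ) : IsDensityMatrix (Φ ρ) := by
  obtain ⟨k, A, hΦA, hTP⟩ := hΦ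
  rw [hΦA]
  refine ⟨posSemidef_sum _ fun i _ => hρ.1.mul_mul_conjTranspose_same (A i), ?_⟩
  have hcycle : ∀ i, trace (A i * ρ * (A i)ᴴ) = trace ((A i)ᴴ * A i * ρ) := fun i => by
    rw [trace_mul_comm, ← mul_assoc]
  rw [trace_sum]
  simp only [hcycle, ← trace_sum, ← Finset.sum_mul, hTP, one_mul, hρ.2]

lemma sigma1_le_of_hsNorm_le {N : ℕ}
    {Φ : Matrix (Fin N) (Fin N) ℂ →ₗ[ℂ] Matrix (Fin N) (Fin N) ℂ} {C : ℝ} (hC : 0 ≤ C)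
    (h : ∀ M, hsNorm (Φ M) ≤ C * hsNorm M) : sigma1 Φ ≤ C :=
  Real.sSup_le (by rintro _ ⟨M, hM, rfl⟩; simpa [hM] using h M) hC

theorem sigma1_le_sqrt_N_tau1 {N : ℕ} (hN : 0 < N)
    (Φ : Matrix (Fin N) (Fin N) ℂ →ₗ[ℂ] Matrix (Fin N) (Fin N) ℂ) (hΦ : IsCPTP Φ) :
    sigma1 Φ ≤ Real.sqrt (N * ⨆ i, singularValues (Φ ((N : ℂ)⁻¹ • 1)) i) ∧
    Real.sqrt (N * ⨆ i, singularValues (Φ ((N : ℂ)⁻¹ • 1)) i) ≤ Real.sqrt N := by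
  have : Nonempty (Fin N) := Fin.pos_iff_nonempty.mp hN
  set ρ := Φ ((N : ℂ)⁻¹ • 1)
  have hρ : IsDensityMatrix ρ :=
    hΦ.isDensityMatrix_apply (by simpa using isDensityMatrix_inv_card_smul_one (Fin N))
  refine ⟨?_, Real.sqrt_le_sqrt
    (mul_le_of_le_one_right N.cast_nonneg hρ.iSup_singularValues_le_one)⟩
  obtain ⟨k, A, hΦA, hTP⟩ := hΦ
  have hN' : (N : ℂ) ≠ 0 := Nat.cast_ne_zero.mpr hN.ne'
  have hH : ∑ i, A i * (A i)ᴴ = N • ρ := by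
    simp only [ρ, hΦA, Matrix.mul_smul, Matrix.smul_mul, Matrix.mul_one, ← Finset.smul_sum,
      ← Nat.cast_smul_eq_nsmul ℂ, smul_smul, mul_inv_cancel₀ hN', one_smul]
  refine sigma1_le_of_hsNorm_le (Real.sqrt_nonneg _) fun M => ?_
  rw [hΦA]
  refine hsNorm_kraus_le A hTP ?_ M
  rw [hH, ← nsmul_eq_mul, map_nsmul]
  exact nsmul_le_nsmul_right hρ.1.le_algebraMap_iSup_singularValues N

end
end

section
/- For any CPTP map Φ on an N-dimensional system and q > 1, the Rényi receiver entropy satisfies S_q^rec(Φ) ≤ (1/(1−q)) ln( Λ^{−q} + (Λ−1)^q / (Λ^q (N²−1)^{q−1}) ), where Λ = Λ_Φ is the trace norm of the superoperator. -/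
open Matrix
open scoped BigOperators Kronecker ComplexOrder

noncomputable section

/-!
Write `σ` for the singular values of the superoperator matrix `S` of `Φ` and `Λ = ∑ σᵢ`.
Trace preservation says `Sᴴ vec(1) = vec(1)`, so `S Sᴴ` has an eigenvalue `≥ 1`, i.e. some
`σᵢ₀ ≥ 1`; a Kraus decomposition and Cauchy–Schwarz bound the Frobenius norm of `S` by `N`, hence
`Λ ≤ N²` by Cauchy–Schwarz once more. Thus `p = σ / Λ` has an entry `pᵢ₀ ≥ a := 1/Λ`, and
`a ≥ b := (1 - a)/(N² - 1)`; this is the majorization `p ≺ (a, b, …, b)`. Instead of Schur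
concavity we add up the tangent-line inequalities of `x ↦ x ^ q` at `a` (for `pᵢ₀`) and at `b`
(for the other entries): `∑ pᵢ ^ q ≥ a ^ q + (N² - 1) b ^ q + q (pᵢ₀ - a) (a ^ (q-1) - b ^ (q-1))`,
and the last term is nonnegative. Taking logarithms and multiplying by `1/(1-q) < 0` gives the
bound.
-/

namespace Real

lemma rpow_add_mul_sub_le_rpow {q c x : ℝ} (hq : 1 ≤ q) (hc : 0 ≤ c) (hx : 0 ≤ x) :
    c ^ q + q * c ^ (q - 1) * (x - c) ≤ x ^ q := by
  rcases hc.eq_or_lt with rfl | hc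
  · rcases hq.eq_or_lt with rfl | hq
    · simp
    · simp [zero_rpow (by linarith : q ≠ 0), zero_rpow (by linarith : q - 1 ≠ 0), rpow_nonneg hx]
  · have hs : -1 ≤ x / c - 1 := by have := div_nonneg hx hc.le; linarith
    calc c ^ q + q * c ^ (q - 1) * (x - c) = c ^ q * (1 + q * (x / c - 1)) := by
          rw [rpow_sub_one hc.ne']; field_simp
      _ ≤ c ^ q * (1 + (x / c - 1)) ^ q := by
          gcongr; exact one_add_mul_self_le_rpow_one_add hs hq
      _ = x ^ q := by
          rw [← mul_rpow hc.le (by linarith), add_sub_cancel, mul_div_cancel₀ _ hc.ne']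

end Real

open Finset in
lemma add_mul_rpow_le_sum_rpow {ι : Type*} [Fintype ι] {p : ι → ℝ} (hp : ∀ i, 0 ≤ p i)
    (hp₁ : ∑ i, p i = 1) {i₀ : ι} {a b q : ℝ} (hb : 0 ≤ b) (hba : b ≤ a) (ha : a ≤ p i₀)
    (hab : a + (Fintype.card ι - 1) * b = 1) (hq : 1 ≤ q) :
    a ^ q + (Fintype.card ι - 1) * b ^ q ≤ ∑ i, p i ^ q := by
  classical
  set t := univ.erase i₀
  have ht : (#t : ℝ) = Fintype.card ι - 1 := by
    rw [card_erase_of_mem (mem_univ _), card_univ, Nat.cast_pred (Fintype.card_pos_iff.mpr ⟨i₀⟩)]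
  have hpt : ∑ i ∈ t, p i = 1 - p i₀ := by
    rw [← hp₁, ← add_sum_erase _ _ (mem_univ i₀)]; ring
  have hslope : b ^ (q - 1) ≤ a ^ (q - 1) := Real.rpow_le_rpow hb hba (by linarith)
  calc a ^ q + (Fintype.card ι - 1) * b ^ q
      ≤ (a ^ q + q * a ^ (q - 1) * (p i₀ - a))
          + ∑ i ∈ t, (b ^ q + q * b ^ (q - 1) * (p i - b)) := by
        rw [sum_add_distrib, ← mul_sum, sum_sub_distrib, hpt, sum_const, sum_const, nsmul_eq_mul,
          nsmul_eq_mul, ht, show (Fintype.card ι - 1 : ℝ) * b = 1 - a by linarith]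
        have hgap : 0 ≤ q * (p i₀ - a) * (a ^ (q - 1) - b ^ (q - 1)) :=
          mul_nonneg (mul_nonneg (by linarith) (by linarith)) (by linarith)
        linear_combination hgap
    _ ≤ p i₀ ^ q + ∑ i ∈ t, p i ^ q :=
        add_le_add (Real.rpow_add_mul_sub_le_rpow hq (hb.trans hba) (hp i₀))
          (sum_le_sum fun i _ => Real.rpow_add_mul_sub_le_rpow hq hb (hp i))
    _ = ∑ i, p i ^ q := add_sum_erase _ (fun i => p i ^ q) (mem_univ i₀)

open Finset Real in
lemma rpow_neg_add_div_le_sum_div_rpow {ι : Type*} [Fintype ι] {σ : ι → ℝ}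
    (hσ : ∀ i, 0 ≤ σ i) {i₀ : ι} (h₁ : 1 ≤ σ i₀) (hΛ : ∑ i, σ i ≤ Fintype.card ι) {q : ℝ}
    (hq : 1 < q) :
    (∑ i, σ i) ^ (-q) + (∑ i, σ i - 1) ^ q / ((∑ i, σ i) ^ q * (Fintype.card ι - 1 : ℝ) ^ (q - 1))
      ≤ ∑ i, (σ i / ∑ j, σ j) ^ q := by
  set Λ := ∑ i, σ i
  have hΛ₁ : 1 ≤ Λ := h₁.trans (single_le_sum (fun i _ => hσ i) (mem_univ i₀))
  have hΛ₀ : 0 < Λ := by linarith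
  have hp : ∀ i, 0 ≤ σ i / Λ := fun i => div_nonneg (hσ i) hΛ₀.le
  have hp₁ : ∑ i, σ i / Λ = 1 := by rw [← sum_div, div_self hΛ₀.ne']
  have ha : Λ⁻¹ ≤ σ i₀ / Λ := by rw [inv_eq_one_div]; gcongr
  have hΛq : Λ ^ (-q) = Λ⁻¹ ^ q := by rw [rpow_neg hΛ₀.le, inv_rpow hΛ₀.le]
  rcases (show (0 : ℝ) ≤ Fintype.card ι - 1 by linarith).eq_or_lt with hm | hm
  -- A single index: then `Λ = 1`, and the second summand is `x / 0 = 0`.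
  · have key := add_mul_rpow_le_sum_rpow hp hp₁ le_rfl (inv_nonneg.mpr hΛ₀.le) ha
      (by rw [← hm]; simp only [zero_mul, add_zero, inv_eq_one]; linarith) hq.le
    rw [← hm, zero_rpow (by linarith), mul_zero, div_zero, add_zero, hΛq]
    simpa [← hm, zero_rpow (by linarith : q ≠ 0)] using key
  · have key := add_mul_rpow_le_sum_rpow hp hp₁ (b := (Λ - 1) / (Λ * (Fintype.card ι - 1)))
      (by positivity) ?_ ha ?_ hq.le
    · convert key using 2
      rw [div_rpow (by linarith) (by positivity), mul_rpow hΛ₀.le hm.le, rpow_sub_one hm.ne']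
      field_simp
    · rw [div_le_iff₀ (by positivity)]
      field_simp
      linarith
    · field_simp
      ring

open Real in
lemma renyiH_le_of_one_le_of_sum_le_card {ι : Type*} [Fintype ι] {σ : ι → ℝ}
    (hσ : ∀ i, 0 ≤ σ i) {i₀ : ι} (h₁ : 1 ≤ σ i₀) (hΛ : ∑ i, σ i ≤ Fintype.card ι) {q : ℝ}
    (hq : 1 < q) :
    renyiH q σ ≤ (1 / (1 - q)) * log ((∑ i, σ i) ^ (-q)
      + (∑ i, σ i - 1) ^ q / ((∑ i, σ i) ^ q * (Fintype.card ι - 1 : ℝ) ^ (q - 1))) := by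
  have hΛ₁ : 1 ≤ ∑ i, σ i := h₁.trans (Finset.single_le_sum (fun i _ => hσ i) (Finset.mem_univ i₀))
  have hcard : (1 : ℝ) ≤ Fintype.card ι := by exact_mod_cast Fintype.card_pos_iff.mpr ⟨i₀⟩
  have hpos : 0 < (∑ i, σ i) ^ (-q)
      + (∑ i, σ i - 1) ^ q / ((∑ i, σ i) ^ q * (Fintype.card ι - 1 : ℝ) ^ (q - 1)) :=
    add_pos_of_pos_of_nonneg (rpow_pos_of_pos (by linarith) _)
      (div_nonneg (rpow_nonneg (by linarith) _)
        (mul_nonneg (rpow_nonneg (by linarith) _) (rpow_nonneg (by linarith) _)))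
  exact mul_le_mul_of_nonpos_left
    (log_le_log hpos (rpow_neg_add_div_le_sum_div_rpow hσ h₁ hΛ hq))
    (div_nonpos_of_nonneg_of_nonpos zero_le_one (by linarith))

lemma norm_sum_mul_star_sq_le {ι 𝕜 : Type*} [Fintype ι] [RCLike 𝕜] (x y : ι → 𝕜) :
    ‖∑ j, x j * star (y j)‖ ^ 2 ≤ (∑ j, ‖x j‖ ^ 2) * ∑ j, ‖y j‖ ^ 2 := by
  have h := norm_inner_le_norm (𝕜 := 𝕜) (WithLp.toLp 2 y) (WithLp.toLp 2 x)
  rw [PiLp.inner_apply] at h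
  have h2 := pow_le_pow_left₀ (norm_nonneg _) h 2
  rw [mul_pow, EuclideanSpace.norm_sq_eq, EuclideanSpace.norm_sq_eq] at h2
  simpa [mul_comm] using h2

namespace Matrix

open scoped MatrixOrder

variable {n 𝕜 : Type*} [Fintype n] [RCLike 𝕜]

lemma trace_mul_conjTranspose_eq_sum_norm_sq {m : Type*} [Fintype m] (X : Matrix n m 𝕜) :
    (X * Xᴴ).trace = ((∑ i, ∑ j, ‖X i j‖ ^ 2 : ℝ) : 𝕜) := by
  simp [trace, mul_apply, RCLike.mul_conj]

variable [DecidableEq n]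

lemma IsHermitian.exists_dotProduct_mulVec_le_eigenvalues [Nonempty n] {A : Matrix n n 𝕜}
    (hA : A.IsHermitian) (v : n → 𝕜) :
    ∃ i, star v ⬝ᵥ A *ᵥ v ≤ (hA.eigenvalues i : 𝕜) * (star v ⬝ᵥ v) := by
  obtain ⟨i, -, hi⟩ := Finset.exists_max_image Finset.univ hA.eigenvalues Finset.univ_nonempty
  refine ⟨i, ?_⟩
  have hle : A ≤ algebraMap ℝ (Matrix n n 𝕜) (hA.eigenvalues i) := by
    refine le_algebraMap_of_spectrum_le (fun x hx => ?_) hA.isSelfAdjoint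
    rw [hA.spectrum_real_eq_range_eigenvalues] at hx
    obtain ⟨j, rfl⟩ := hx
    exact hi j (Finset.mem_univ j)
  have := (le_iff.mp hle).dotProduct_mulVec_nonneg v
  rw [sub_mulVec, dotProduct_sub, sub_nonneg, Algebra.algebraMap_eq_smul_one, smul_mulVec,
    one_mulVec, dotProduct_smul] at this
  simpa [RCLike.real_smul_eq_coe_mul] using this

lemma sum_sq_singularValues (X : Matrix n n ℂ) :
    ∑ i, singularValues X i ^ 2 = ∑ i, ∑ j, ‖X i j‖ ^ 2 := by
  have hX := posSemidef_self_mul_conjTranspose X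
  simp_rw [singularValues, Real.sq_sqrt (hX.eigenvalues_nonneg _)]
  have := hX.1.trace_eq_sum_eigenvalues
  rw [trace_mul_conjTranspose_eq_sum_norm_sq] at this
  exact_mod_cast this.symm

lemma sq_sum_singularValues_le (X : Matrix n n ℂ) :
    (∑ i, singularValues X i) ^ 2 ≤ Fintype.card n * ∑ i, ∑ j, ‖X i j‖ ^ 2 := by
  rw [← sum_sq_singularValues]
  exact sq_sum_le_card_mul_sum_sq

lemma exists_one_le_singularValues {X : Matrix n n ℂ} {v : n → ℂ} (hv : v ≠ 0)
    (hXv : Xᴴ *ᵥ v = v) : ∃ i, 1 ≤ singularValues X i := by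
  obtain ⟨j, -⟩ := Function.ne_iff.mp hv
  have : Nonempty n := ⟨j⟩
  obtain ⟨i, hi⟩ :=
    (posSemidef_self_mul_conjTranspose X).1.exists_dotProduct_mulVec_le_eigenvalues v
  have hvX : star v ᵥ* X = star v := by
    simpa [star_mulVec] using congrArg star hXv
  rw [← mulVec_mulVec, hXv, dotProduct_mulVec, hvX,
    le_mul_iff_one_le_left (dotProduct_star_self_pos_iff.mpr hv)] at hi
  exact ⟨i, Real.one_le_sqrt.mpr (Complex.real_le_real.mp (by simpa using hi))⟩

end Matrix

section Channel

open Matrix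

variable {N : ℕ} {Φ : Matrix (Fin N) (Fin N) ℂ →ₗ[ℂ] Matrix (Fin N) (Fin N) ℂ}

lemma superMatrix_apply_of_kraus {k : ℕ} {A : Fin k → Matrix (Fin N) (Fin N) ℂ}
    (hΦ : ∀ ρ, Φ ρ = ∑ i, A i * ρ * (A i)ᴴ) (p r : Fin N × Fin N) :
    superMatrix Φ p r = ∑ j, A j p.1 r.1 * star (A j p.2 r.2) := by
  simp [superMatrix, hΦ, Matrix.sum_apply, mul_apply, single, ite_and]

lemma IsCPTP.trace_apply (hΦ : IsCPTP Φ) (M : Matrix (Fin N) (Fin N) ℂ) :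
    (Φ M).trace = M.trace := by
  obtain ⟨k, A, hK, hTP⟩ := hΦ
  simp_rw [hK, trace_sum, fun j => trace_mul_cycle (A j) M (A j)ᴴ, ← trace_sum, ← Finset.sum_mul,
    hTP, one_mul]

lemma IsCPTP.conjTranspose_superMatrix_mulVec (hΦ : IsCPTP Φ) :
    (superMatrix Φ)ᴴ *ᵥ (fun p => (1 : Matrix (Fin N) (Fin N) ℂ) p.1 p.2)
      = fun p => (1 : Matrix (Fin N) (Fin N) ℂ) p.1 p.2 := by
  funext r
  have hr : ((superMatrix Φ)ᴴ *ᵥ fun p => (1 : Matrix (Fin N) (Fin N) ℂ) p.1 p.2) r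
      = star (Φ (single r.1 r.2 1)).trace := by
    simp [mulVec, dotProduct, Fintype.sum_prod_type, one_apply, trace, superMatrix]
  rw [hr, hΦ.trace_apply]
  by_cases h : r.1 = r.2 <;> simp [h, one_apply]

lemma IsCPTP.sum_norm_sq_superMatrix_le (hΦ : IsCPTP Φ) :
    ∑ p, ∑ r, ‖superMatrix Φ p r‖ ^ 2 ≤ (N : ℝ) ^ 2 := by
  obtain ⟨k, A, hK, hTP⟩ := hΦ
  set u : Fin N → Fin N → ℝ := fun a c => ∑ j, ‖A j a c‖ ^ 2
  have hu : ∑ a, ∑ c, u a c = N := by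
    have h := congrArg trace hTP
    simp only [trace_sum, trace_one, Fintype.card_fin] at h
    have hj : ∀ j, ((A j)ᴴ * A j).trace = ((∑ c, ∑ a, ‖A j a c‖ ^ 2 : ℝ) : ℂ) := fun j => by
      simpa using trace_mul_conjTranspose_eq_sum_norm_sq (A j)ᴴ
    simp_rw [hj] at h
    calc ∑ a, ∑ c, u a c = ∑ c, ∑ a, ∑ j, ‖A j a c‖ ^ 2 := Finset.sum_comm
      _ = ∑ c, ∑ j, ∑ a, ‖A j a c‖ ^ 2 := Finset.sum_congr rfl fun _ _ => Finset.sum_comm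
      _ = ∑ j, ∑ c, ∑ a, ‖A j a c‖ ^ 2 := Finset.sum_comm
      _ = N := by exact_mod_cast h
  calc ∑ p, ∑ r, ‖superMatrix Φ p r‖ ^ 2
      ≤ ∑ p : Fin N × Fin N, ∑ r : Fin N × Fin N, u p.1 r.1 * u p.2 r.2 := by
        gcongr with p _ r _
        rw [superMatrix_apply_of_kraus hK]
        exact norm_sum_mul_star_sq_le _ _
    _ = (∑ a, ∑ c, u a c) ^ 2 := by simp_rw [Fintype.sum_prod_type, sq, Finset.sum_mul_sum]
    _ = (N : ℝ) ^ 2 := by rw [hu]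

end Channel

theorem renyi_receiver_entropy_upper_bound {N : ℕ} (hN : 0 < N)
    (Φ : Matrix (Fin N) (Fin N) ℂ →ₗ[ℂ] Matrix (Fin N) (Fin N) ℂ) (hΦ : IsCPTP Φ) (q : ℝ) (hq : 1 < q) :
    renyiH q (singularValues (superMatrix Φ))
      ≤ (1 / (1 - q)) *
        Real.log ((∑ i, singularValues (superMatrix Φ) i) ^ (-q)
          + ((∑ i, singularValues (superMatrix Φ) i) - 1) ^ q /
            ((∑ i, singularValues (superMatrix Φ) i) ^ q
              * ((N : ℝ) ^ 2 - 1) ^ (q - 1))) := by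
  have hvec : (fun p : Fin N × Fin N => (1 : Matrix (Fin N) (Fin N) ℂ) p.1 p.2) ≠ 0 :=
    Function.ne_iff.mpr ⟨(⟨0, hN⟩, ⟨0, hN⟩), by simp⟩
  obtain ⟨i₀, hi₀⟩ := exists_one_le_singularValues hvec hΦ.conjTranspose_superMatrix_mulVec
  have hcard : (Fintype.card (Fin N × Fin N) : ℝ) = (N : ℝ) ^ 2 := by simp [sq]
  have hΛ : ∑ i, singularValues (superMatrix Φ) i ≤ Fintype.card (Fin N × Fin N) := by
    rw [hcard]
    refine le_of_pow_le_pow_left₀ two_ne_zero (by positivity) ?_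
    calc (∑ i, singularValues (superMatrix Φ) i) ^ 2
        ≤ (N : ℝ) ^ 2 * ∑ p, ∑ r, ‖superMatrix Φ p r‖ ^ 2 := by
          rw [← hcard]; exact sq_sum_singularValues_le _
      _ ≤ ((N : ℝ) ^ 2) ^ 2 := by
          rw [sq ((N : ℝ) ^ 2)]; gcongr; exact hΦ.sum_norm_sq_superMatrix_le
  have := renyiH_le_of_one_le_of_sum_le_card (fun _ => Real.sqrt_nonneg _) hi₀ hΛ hq
  rwa [hcard] at this
end
end
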